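/- Two reward functions θ, θ' ∈ ℝ^S are behaviorally equivalent in all MDP tasks (i.e., for every environment E and task reward R, the sets of optimal policies under R+θ and under R+θ' coincide) if and only if θ - θ' = c·1 for some c ∈ ℝ. -/

import Mathlib

/-- A controlled Markov process: finite state space `S`, action space `A`,
initial distribution `μ`, transition function `P`, discount factor `γ ∈ [0,1)`. -/
structure CMP (S A : Type) [Fintype S] where
  μ : S → ℝ
  μ_nonneg : ∀ s, 0 ≤ μ s
  μ_sum : ∑ s, μ s = 1
  P : S → A → S → ℝ
  P_nonneg : ∀ s a s', 0 ≤ P s a s'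
  P_sum : ∀ s a, ∑ s', P s a s' = 1
  γ : ℝ
  γ_nonneg : 0 ≤ γ
  γ_lt_one : γ < 1

variable {S A : Type} [Fintype S] [DecidableEq S]

/-- Transition matrix of the Markov chain induced by policy `π`. -/
def CMP.polMatrix (E : CMP S A) (π : S → A) : Matrix S S ℝ :=
  Matrix.of fun s s' => E.P s (π s) s'

/-- Normalized discounted state occupancy:
`η(s) = (1-γ) · Σ_{t ≥ 1} γ^(t-1) · P(s_t = s | s_0 ∼ μ; π)`. -/
noncomputable def CMP.occupancy (E : CMP S A) (π : S → A) (s : S) : ℝ :=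
  (1 - E.γ) * ∑' t : ℕ, E.γ ^ t * Matrix.vecMul E.μ (E.polMatrix π ^ (t + 1)) s

/-- Value of policy `π` under reward `Y`: `Y^⊤ η^π`. -/
noncomputable def CMP.value (E : CMP S A) (Y : S → ℝ) (π : S → A) : ℝ :=
  ∑ s, Y s * E.occupancy π s

/-- A policy is optimal for reward `Y` if it maximizes the value. -/
def CMP.IsOptimal (E : CMP S A) (Y : S → ℝ) (π : S → A) : Prop :=
  ∀ π', E.value Y π' ≤ E.value Y π

/-!
Adding a constant `c` to a reward adds exactly `c` to every policy's value, because the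
occupancy measure is a probability distribution; so rewards differing by a constant have the
same optimal policies. Conversely, in the environment with `γ = 0` in which the action taken at
the initial state `s₀` chooses the next state, a policy's value is the reward of the state it
picks. Choosing `R` so that `R + θ` is maximal exactly at `s` and `s₀` makes both choices
optimal, hence optimal for `R + θ'` too, which forces `θ s - θ' s = θ s₀ - θ' s₀`.
-/

open Matrix

lemma Matrix.sum_vecMul_of_mem_rowStochastic {R n : Type*} [Fintype n] [DecidableEq n]
    [Semiring R] [PartialOrder R] [IsOrderedRing R] {M : Matrix n n R}
    (hM : M ∈ rowStochastic R n) (x : n → R) :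
    ∑ j, (x ᵥ* M) j = ∑ i, x i := by
  rw [← dotProduct_one, ← dotProduct_one, ← dotProduct_mulVec,
    one_vecMul_of_mem_rowStochastic hM]

namespace CMP

lemma polMatrix_mem_rowStochastic (E : CMP S A) (π : S → A) :
    E.polMatrix π ∈ rowStochastic ℝ S :=
  mem_rowStochastic_iff_sum.2 ⟨fun s s' => E.P_nonneg s (π s) s', fun s => E.P_sum s (π s)⟩

lemma vecMul_polMatrix_pow_nonneg (E : CMP S A) (π : S → A) (t : ℕ) (s : S) :
    0 ≤ (E.μ ᵥ* E.polMatrix π ^ t) s :=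
  nonneg_vecMul_of_mem_rowStochastic (pow_mem (E.polMatrix_mem_rowStochastic π) t) E.μ_nonneg s

lemma sum_vecMul_polMatrix_pow (E : CMP S A) (π : S → A) (t : ℕ) :
    ∑ s, (E.μ ᵥ* E.polMatrix π ^ t) s = 1 := by
  rw [sum_vecMul_of_mem_rowStochastic (pow_mem (E.polMatrix_mem_rowStochastic π) t), E.μ_sum]

lemma summable_γ_pow_mul_vecMul_polMatrix_pow (E : CMP S A) (π : S → A) (s : S) :
    Summable fun t : ℕ => E.γ ^ t * (E.μ ᵥ* E.polMatrix π ^ (t + 1)) s := by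
  refine .of_nonneg_of_le
    (fun t => mul_nonneg (pow_nonneg E.γ_nonneg t) (E.vecMul_polMatrix_pow_nonneg π _ s)) (fun t => ?_)
    (summable_geometric_of_lt_one E.γ_nonneg E.γ_lt_one)
  have hle : (E.μ ᵥ* E.polMatrix π ^ (t + 1)) s ≤ 1 :=
    E.sum_vecMul_polMatrix_pow π (t + 1) ▸
      Finset.single_le_sum (fun s' _ => E.vecMul_polMatrix_pow_nonneg π _ s') (Finset.mem_univ s)
  exact mul_le_of_le_one_right (pow_nonneg E.γ_nonneg t) hle

lemma sum_occupancy (E : CMP S A) (π : S → A) : ∑ s, E.occupancy π s = 1 := by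
  have hγ : 1 - E.γ ≠ 0 := sub_ne_zero.2 E.γ_lt_one.ne'
  simp only [occupancy, ← Finset.mul_sum]
  rw [← Summable.tsum_finsetSum fun s _ => E.summable_γ_pow_mul_vecMul_polMatrix_pow π s]
  simp only [← Finset.mul_sum, sum_vecMul_polMatrix_pow, mul_one]
  rw [tsum_geometric_of_lt_one E.γ_nonneg E.γ_lt_one, mul_inv_cancel₀ hγ]

lemma value_add_const (E : CMP S A) (Y : S → ℝ) (c : ℝ) (π : S → A) :
    E.value (fun s => Y s + c) π = E.value Y π + c := by
  simp only [value, add_mul, Finset.sum_add_distrib, ← Finset.mul_sum, sum_occupancy, mul_one]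

lemma isOptimal_add_const_iff (E : CMP S A) (Y : S → ℝ) (c : ℝ) (π : S → A) :
    E.IsOptimal (fun s => Y s + c) π ↔ E.IsOptimal Y π := by
  simp only [IsOptimal, value_add_const, add_le_add_iff_right]

lemma occupancy_of_γ_eq_zero (E : CMP S A) (hγ : E.γ = 0) (π : S → A) (s : S) :
    E.occupancy π s = (E.μ ᵥ* E.polMatrix π) s := by
  rw [occupancy, hγ, tsum_eq_single 0 fun t ht => by simp [zero_pow ht]]
  simp

def choiceEnv (s₀ : S) : CMP S S where
  μ := Pi.single s₀ 1
  μ_nonneg s := by by_cases h : s = s₀ <;> simp [h]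
  μ_sum := by simp
  P _ a := Pi.single a 1
  P_nonneg _ a s := by by_cases h : s = a <;> simp [h]
  P_sum _ a := by simp
  γ := 0
  γ_nonneg := le_rfl
  γ_lt_one := zero_lt_one

lemma value_choiceEnv (s₀ : S) (Y : S → ℝ) (π : S → S) :
    (choiceEnv s₀).value Y π = Y (π s₀) := by
  simp only [value, occupancy_of_γ_eq_zero (choiceEnv s₀) rfl]
  simp [choiceEnv, polMatrix, Pi.single_apply]

lemma isOptimal_choiceEnv_iff (s₀ : S) (Y : S → ℝ) (π : S → S) :
    (choiceEnv s₀).IsOptimal Y π ↔ ∀ s, Y s ≤ Y (π s₀) := by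
  simp only [IsOptimal, value_choiceEnv]
  exact ⟨fun h s => h fun _ => s, fun h π' => h (π' s₀)⟩

lemma sub_eq_sub_of_optimal_eq_choiceEnv {θ θ' : S → ℝ} (s₀ : S)
    (h : ∀ R : S → ℝ, {π | (choiceEnv s₀).IsOptimal (fun s => R s + θ s) π} =
      {π | (choiceEnv s₀).IsOptimal (fun s => R s + θ' s) π}) (s : S) :
    θ s - θ' s = θ s₀ - θ' s₀ := by
  set R : S → ℝ := fun x => -θ x - if x = s ∨ x = s₀ then 0 else 1 with hR
  have hopt : ∀ a, a = s ∨ a = s₀ → ∀ x, R x + θ' x ≤ R a + θ' a := by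
    intro a ha
    have hθ : (fun _ : S => a) ∈ {π | (choiceEnv s₀).IsOptimal (fun x => R x + θ x) π} := by
      refine (isOptimal_choiceEnv_iff s₀ _ _).2 fun x => ?_
      simp only [hR, ha, if_true]
      split_ifs <;> linarith
    exact (isOptimal_choiceEnv_iff s₀ _ _).1 (h R ▸ hθ)
  have h₁ := hopt s (.inl rfl) s₀
  have h₂ := hopt s₀ (.inr rfl) s
  simp only [hR, true_or, or_true, if_true] at h₁ h₂
  linarith

end CMP

theorem stmt3_general (θ θ' : S → ℝ) :
    (∀ (A : Type) (_ : Fintype A) (E : CMP S A) (R : S → ℝ),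
        {π | E.IsOptimal (fun s => R s + θ s) π} =
          {π | E.IsOptimal (fun s => R s + θ' s) π})
      ↔ ∃ c : ℝ, ∀ s, θ s - θ' s = c := by
  constructor
  · intro h
    rcases isEmpty_or_nonempty S with _ | ⟨⟨s₀⟩⟩
    · exact ⟨0, isEmptyElim⟩
    · exact ⟨θ s₀ - θ' s₀,
        CMP.sub_eq_sub_of_optimal_eq_choiceEnv s₀ (h S inferInstance (CMP.choiceEnv s₀))⟩
  · rintro ⟨c, hc⟩ A _ E R
    have hshift : (fun s => R s + θ s) = fun s => (R s + θ' s) + c :=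
      funext fun s => by linarith [hc s]
    ext π
    simp only [Set.mem_ofPred_eq, hshift, CMP.isOptimal_add_const_iff]

/-- θ and θ' are behaviorally equivalent in all MDP tasks iff
θ - θ' = c·1 for some c ∈ ℝ. -/
theorem stmt3 (θ θ' : S → ℝ) (hcard : 2 ≤ Fintype.card S) :
    (∀ (A : Type) (_ : Fintype A) (E : CMP S A) (R : S → ℝ),
        {π | E.IsOptimal (fun s => R s + θ s) π} =
          {π | E.IsOptimal (fun s => R s + θ' s) π})
      ↔ ∃ c : ℝ, ∀ s, θ s - θ' s = c :=
  stmt3_general θ θ'
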